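/- Let p be a prime and f : R₁ → R₂ a ring homomorphism of perfect 𝔽_p-algebras, and let C(f) : C(R₁) → C(R₂) be the induced ring homomorphism (induced functorially by the multiplicative map r ↦ [f(r)]). If f is injective then C(f) is injective, and if f is surjective then C(f) is surjective. -/

import Mathlib

/-!
Surjectivity is formal: `ℤR₁ → ℤR₂` is onto and carries `I₁` onto `I₂`, so a compatible system
in `lim ℤR₂/I₂^ν` lifts level by level.

Injectivity rests on the Teichmüller lift `θ : ℤR → W(R)`, `[r] ↦ τ(r)`. For perfect `R` one
has `I^ν = θ⁻¹(p^ν W(R))`. Since the zeroth Witt coordinate of `θ` is `π`, `I = θ⁻¹(p W(R))`,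
giving `⊆`. For `⊇`, the congruence `[a]^p + [b]^p - [a+b]^p ≡ ([a] + [b] - [a+b])^p (mod p)`
shows `I ⊆ (p) + I²`, hence `I^ν ⊆ (p^ν) + I^(ν+1)`, and one inducts using that `W(R)` is
`p`-torsion free. As `p^ν W(R)` consists of the Witt vectors whose first `ν` coordinates vanish
and `W(f)` acts coordinatewise, an injective `f` gives `(ℤf)⁻¹(I₂^ν) = I₁^ν` at every level.
-/

set_option synthInstance.maxHeartbeats 1000000
set_option maxHeartbeats 1000000

open MonoidAlgebra

/-- `ℤR`: the monoid algebra over `ℤ` of the multiplicative monoid `(R, ·)`. -/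
abbrev ZR (R : Type*) [CommRing R] : Type _ := MonoidAlgebra ℤ R

/-- The canonical ring homomorphism `π : ℤR → R`, `Σ n_r [r] ↦ Σ n_r r`. -/
noncomputable def piHom (R : Type*) [CommRing R] : ZR R →+* R :=
  (MonoidAlgebra.lift ℤ R R (MonoidHom.id R)).toRingHom

/-- The ideal `I = ker (π : ℤR → R)`. -/
noncomputable def Iid (R : Type*) [CommRing R] : Ideal (ZR R) := RingHom.ker (piHom R)

/-- The inverse limit `lim_ν A⧸I^ν` realized as a subring of the product `Π ν, A⧸I^ν`
(families compatible under the canonical factor maps). -/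
def Clim (A : Type*) [CommRing A] (I : Ideal A) : Subring (Π ν : ℕ, A ⧸ I ^ ν) where
  carrier := { x | ∀ ⦃m ν : ℕ⦄ (h : m ≤ ν),
    Ideal.Quotient.factor (Ideal.pow_le_pow_right h) (x ν) = x m }
  zero_mem' := by intro m ν h; simp
  one_mem' := by intro m ν h; simp
  add_mem' := by intro x y hx hy m ν h; simp only [Pi.add_apply, map_add, hx h, hy h]
  mul_mem' := by intro x y hx hy m ν h; simp only [Pi.mul_apply, map_mul, hx h, hy h]
  neg_mem' := by intro x hx m ν h; simp only [Pi.neg_apply, map_neg, hx h]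

/-- The projection of the completion `lim_ν A⧸I^ν` onto its `ν`-th level `A⧸I^ν`. -/
def Ceval (A : Type*) [CommRing A] (I : Ideal A) (ν : ℕ) : Clim A I →+* A ⧸ I ^ ν :=
  (Pi.evalRingHom _ ν).comp (Clim A I).subtype

/-- The canonical map `A → lim_ν A⧸I^ν`. -/
def CofRingHom (A : Type*) [CommRing A] (I : Ideal A) : A →+* Clim A I where
  toFun a := ⟨fun ν => Ideal.Quotient.mk _ a, fun _ _ _ => Ideal.Quotient.factor_mk _ _⟩
  map_one' := rfl
  map_mul' _ _ := rfl
  map_zero' := rfl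
  map_add' _ _ := rfl

/-- `C(R)`: the `I`-adic completion of `ℤR`. -/
noncomputable abbrev CR (R : Type*) [CommRing R] : Type _ := Clim (ZR R) (Iid R)

/-- The canonical projection `π̄ : C(R) → R` induced by `π`. -/
noncomputable def CtoR (R : Type*) [CommRing R] : CR R →+* R :=
  (Ideal.Quotient.lift (Iid R) (piHom R) (fun _ ha => ha)).comp
    (((Ideal.quotEquivOfEq (pow_one (Iid R))).toRingHom).comp (Ceval (ZR R) (Iid R) 1))

/-- The ring homomorphism `ℤR₁ → ℤR₂` induced by a ring homomorphism `f : R₁ → R₂`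
(via the multiplicative map `r ↦ [f r]`). -/
noncomputable def ZRmap {R₁ R₂ : Type*} [CommRing R₁] [CommRing R₂] (f : R₁ →+* R₂) :
    ZR R₁ →+* ZR R₂ :=
  MonoidAlgebra.mapDomainRingHom ℤ f.toMonoidHom

lemma piHom_comp_ZRmap {R₁ R₂ : Type*} [CommRing R₁] [CommRing R₂] (f : R₁ →+* R₂) :
    (piHom R₂).comp (ZRmap f) = f.comp (piHom R₁) := by
  apply MonoidAlgebra.ringHom_ext <;> intro a <;>
    simp [ZRmap, piHom, MonoidAlgebra.lift_single, Finsupp.mapDomain_single]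

lemma Iid_pow_le {R₁ R₂ : Type*} [CommRing R₁] [CommRing R₂] (f : R₁ →+* R₂) (ν : ℕ) :
    Iid R₁ ^ ν ≤ (Iid R₂ ^ ν).comap (ZRmap f) := by
  rw [← Ideal.map_le_iff_le_comap, Ideal.map_pow]
  refine Ideal.pow_right_mono ?_ ν
  rw [Ideal.map_le_iff_le_comap]
  intro x hx
  have : piHom R₂ (ZRmap f x) = f (piHom R₁ x) := by
    have := congrArg (fun g : ZR R₁ →+* R₂ => g x) (piHom_comp_ZRmap f)
    simpa using this
  have hx0 : piHom R₁ x = 0 := hx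
  simp only [Ideal.mem_comap]
  exact RingHom.mem_ker.mpr (by rw [this, hx0, map_zero])

/-- The ring homomorphism `C(f) : C(R₁) → C(R₂)` functorially induced by `f : R₁ → R₂`. -/
noncomputable def Cmap {R₁ R₂ : Type*} [CommRing R₁] [CommRing R₂] (f : R₁ →+* R₂) :
    CR R₁ →+* CR R₂ :=
  RingHom.codRestrict
    ((Pi.ringHom fun ν => (Ideal.quotientMap (Iid R₂ ^ ν) (ZRmap f) (Iid_pow_le f ν)).comp
        (Pi.evalRingHom _ ν)).comp (Clim (ZR R₁) (Iid R₁)).subtype)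
    (Clim (ZR R₂) (Iid R₂))
    (by
      intro x
      intro m ν h
      obtain ⟨a, ha⟩ := Ideal.Quotient.mk_surjective ((x : Π ν, ZR R₁ ⧸ Iid R₁ ^ ν) ν)
      have hm : (x : Π ν, ZR R₁ ⧸ Iid R₁ ^ ν) m = Ideal.Quotient.mk _ a := by
        rw [← x.2 h, ← ha, Ideal.Quotient.factor_mk]
      change Ideal.Quotient.factor (Ideal.pow_le_pow_right h)
          (Ideal.quotientMap (Iid R₂ ^ ν) (ZRmap f) (Iid_pow_le f ν)
            ((x : Π ν, ZR R₁ ⧸ Iid R₁ ^ ν) ν)) =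
        Ideal.quotientMap (Iid R₂ ^ m) (ZRmap f) (Iid_pow_le f m) ((x : Π ν, ZR R₁ ⧸ Iid R₁ ^ ν) m)
      rw [← ha, hm, Ideal.quotientMap_mk, Ideal.quotientMap_mk, Ideal.Quotient.factor_mk])

open WittVector Function

section Completion

variable {A B : Type*} [CommRing A] [CommRing B] {I : Ideal A} {J : Ideal B}

noncomputable def Clim.map (g : A →+* B) (hg : ∀ ν, I ^ ν ≤ (J ^ ν).comap g) :
    Clim A I →+* Clim B J :=
  RingHom.codRestrict
    ((RingHom.pi fun ν => (Ideal.quotientMap (J ^ ν) g (hg ν)).comp (Pi.evalRingHom _ ν)).comp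
      (Clim A I).subtype)
    (Clim B J)
    (fun x m ν h => by
      obtain ⟨a, ha⟩ := Ideal.Quotient.mk_surjective (x.1 ν)
      change Ideal.Quotient.factor (Ideal.pow_le_pow_right h)
          (Ideal.quotientMap (J ^ ν) g (hg ν) (x.1 ν)) = Ideal.quotientMap (J ^ m) g (hg m) (x.1 m)
      rw [← x.2 h, ← ha, Ideal.quotientMap_mk, Ideal.Quotient.factor_mk,
        Ideal.Quotient.factor_mk, Ideal.quotientMap_mk])

theorem Clim.map_injective (g : A →+* B) (hg : ∀ ν, I ^ ν ≤ (J ^ ν).comap g)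
    (h : ∀ ν, (J ^ ν).comap g ≤ I ^ ν) : Injective (Clim.map g hg) := fun _ _ hxy =>
  Subtype.ext <| funext fun ν =>
    Ideal.quotientMap_injective' (H := hg ν) (h ν) (congrFun (congrArg Subtype.val hxy) ν)

theorem Clim.map_surjective (g : A →+* B) (hg : ∀ ν, I ^ ν ≤ (J ^ ν).comap g)
    (hsurj : Surjective g) (hIJ : I.map g = J) : Surjective (Clim.map g hg) := by
  intro y
  let Lift (ν : ℕ) := {a : A // Ideal.Quotient.mk (J ^ ν) (g a) = y.1 ν}
  have step (ν : ℕ) (a : Lift ν) : ∃ a' : Lift (ν + 1), a'.1 - a.1 ∈ I ^ ν := by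
    obtain ⟨t, ht⟩ := Ideal.Quotient.mk_surjective (y.1 (ν + 1))
    have hdiff : g a.1 - t ∈ (I ^ ν).map g := by
      rw [Ideal.map_pow, hIJ, ← Ideal.Quotient.eq, a.2, ← y.2 ν.le_succ, ← ht,
        Ideal.Quotient.factor_mk]
    obtain ⟨δ, hδ, hgδ⟩ := (Ideal.mem_map_iff_of_surjective g hsurj).mp hdiff
    exact ⟨⟨a.1 - δ, by rw [map_sub, hgδ, sub_sub_cancel, ht]⟩, by simpa using neg_mem hδ⟩
  choose next hnext using step
  have lift₀ : Lift 0 := ⟨0, by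
    obtain ⟨t, ht⟩ := Ideal.Quotient.mk_surjective (y.1 0)
    rw [← ht, Ideal.Quotient.eq, pow_zero, Ideal.one_eq_top]
    trivial⟩
  let seq : (ν : ℕ) → Lift ν := fun ν => Nat.rec lift₀ next ν
  have hseq {m ν : ℕ} (h : m ≤ ν) : (seq ν).1 - (seq m).1 ∈ I ^ m := by
    induction ν, h using Nat.le_induction with
    | base => simp
    | succ ν hmν ih =>
      rw [← sub_add_sub_cancel]
      exact add_mem (Ideal.pow_le_pow_right hmν (hnext ν (seq ν))) ih
  refine ⟨⟨fun ν => Ideal.Quotient.mk (I ^ ν) (seq ν).1, fun m ν h => ?_⟩, ?_⟩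
  · rw [Ideal.Quotient.factor_mk]
    exact Ideal.Quotient.eq.mpr (hseq h)
  · exact Subtype.ext <| funext fun ν => (Ideal.quotientMap_mk (H := hg ν)).trans (seq ν).2

end Completion

theorem Ideal.pow_le_pow_sup_pow_succ {A : Type*} [CommRing A] {I P : Ideal A} (hP : P ≤ I)
    (hI : I ≤ P ⊔ I ^ 2) (ν : ℕ) : I ^ ν ≤ P ^ ν ⊔ I ^ (ν + 1) := by
  induction ν with
  | zero => simp
  | succ ν ih =>
    have hPνI : P ^ ν * I ≤ P ^ (ν + 1) ⊔ I ^ (ν + 2) := calc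
      P ^ ν * I ≤ P ^ ν * (P ⊔ I ^ 2) := Ideal.mul_mono_right hI
      _ = P ^ (ν + 1) ⊔ P ^ ν * I ^ 2 := by rw [Ideal.mul_sup, ← pow_succ]
      _ ≤ P ^ (ν + 1) ⊔ I ^ (ν + 2) := sup_le_sup_left
        ((Ideal.mul_mono_left (Ideal.pow_right_mono hP ν)).trans (pow_add I ν 2).ge) _
    calc I ^ (ν + 1) = I ^ ν * I := pow_succ _ _
      _ ≤ (P ^ ν ⊔ I ^ (ν + 1)) * I := Ideal.mul_mono_left ih
      _ = P ^ ν * I ⊔ I ^ (ν + 2) := by rw [Ideal.sup_mul, ← pow_succ]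
      _ ≤ P ^ (ν + 1) ⊔ I ^ (ν + 2) := sup_le hPνI le_sup_right

namespace WittVector

variable {p : ℕ} [Fact p.Prime] {k : Type*} [CommRing k] [CharP k p] [PerfectRing k p]

theorem eq_zero_of_p_pow_mul_eq_zero {x : WittVector p k} :
    ∀ n, (p : WittVector p k) ^ n * x = 0 → x = 0
  | 0, h => by simpa using h
  | n + 1, h => eq_zero_of_p_pow_mul_eq_zero n <| eq_zero_of_p_mul_eq_zero _ <| by
      rw [← h]; ring

theorem mem_span_p_of_p_pow_mul_mem {x : WittVector p k} {n : ℕ}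
    (h : (p : WittVector p k) ^ n * x ∈ Ideal.span {(p : WittVector p k) ^ (n + 1)}) :
    x ∈ Ideal.span {(p : WittVector p k)} := by
  obtain ⟨y, hy⟩ := Ideal.mem_span_singleton.mp h
  have : x - p * y = 0 := eq_zero_of_p_pow_mul_eq_zero n (by rw [mul_sub, hy]; ring)
  exact Ideal.mem_span_singleton.mpr ⟨y, sub_eq_zero.mp this⟩

theorem mem_span_p_pow_of_map_mem {k' : Type*} [CommRing k'] [CharP k' p] [PerfectRing k' p]
    {f : k →+* k'} (hf : Injective f) {x : WittVector p k} {n : ℕ}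
    (h : WittVector.map f x ∈ Ideal.span {(p : WittVector p k') ^ n}) :
    x ∈ Ideal.span {(p : WittVector p k) ^ n} := by
  rw [mem_span_p_pow_iff_le_coeff_eq_zero] at h ⊢
  intro m hm
  apply hf
  rw [← map_coeff, h m hm, map_zero]

end WittVector

section ZR

variable {R : Type*} [CommRing R]

theorem ZR.ringHom_ext {S : Type*} [Ring S] {φ ψ : ZR R →+* S}
    (h : ∀ r : R, φ (of ℤ R r) = ψ (of ℤ R r)) : φ = ψ :=
  MonoidAlgebra.ringHom_ext' (RingHom.ext_int _ _) (MonoidHom.ext h)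

@[simp]
theorem piHom_of (r : R) : piHom R (of ℤ R r) = r := by
  simp [piHom]

@[simp]
theorem ZRmap_of {R' : Type*} [CommRing R'] (f : R →+* R') (r : R) :
    ZRmap f (of ℤ R r) = of ℤ R' (f r) := by
  simp [ZRmap]

theorem natCast_mem_Iid (p : ℕ) [CharP R p] : (p : ZR R) ∈ Iid R := by
  rw [Iid, RingHom.mem_ker, map_natCast, CharP.cast_eq_zero]

theorem Iid_le_of_of_add_sub_mem {J : Ideal (ZR R)}
    (h : ∀ x y : R, of ℤ R x + of ℤ R y - of ℤ R (x + y) ∈ J) : Iid R ≤ J := by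
  -- `r ↦ [r] mod J` is additive, so `ℤR → ℤR ⧸ J` factors additively through `π`
  let σ : R →+ ZR R ⧸ J := AddMonoidHom.mk' (fun r => Ideal.Quotient.mk J (of ℤ R r))
    fun x y => by rw [← map_add]; exact (Ideal.Quotient.eq.mpr (h x y)).symm
  have hfactor : (Ideal.Quotient.mk J).toAddMonoidHom = σ.comp (piHom R).toAddMonoidHom :=
    MonoidAlgebra.addMonoidHom_ext fun r n => by
      have hsingle : (single r n : ZR R) = n • of ℤ R r := by
        rw [of_apply, smul_single', mul_one]
      show Ideal.Quotient.mk J (single r n) = σ (piHom R (single r n))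
      rw [hsingle, map_zsmul, map_zsmul, piHom_of, map_zsmul]
      rfl
  intro t ht
  rw [← Ideal.Quotient.eq_zero_iff_mem]
  simpa [RingHom.mem_ker.mp ht] using DFunLike.congr_fun hfactor t

theorem of_pow_add_of_pow_sub_of_add_pow_mem {p : ℕ} (hp : p.Prime) (a b : R) :
    of ℤ R a ^ p + of ℤ R b ^ p - of ℤ R (a + b) ^ p ∈
      Ideal.span {(p : ZR R)} ⊔ Iid R ^ 2 := by
  set d := of ℤ R a + of ℤ R b - of ℤ R (a + b)
  have hd : d ∈ Iid R := by
    rw [Iid, RingHom.mem_ker, map_sub, map_add, piHom_of, piHom_of, piHom_of, sub_self]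
  obtain ⟨r, hr⟩ := exists_add_pow_prime_eq hp (of ℤ R a) (of ℤ R b)
  obtain ⟨r', hr'⟩ := exists_add_pow_prime_eq hp (of ℤ R (a + b)) d
  have hsum : of ℤ R a ^ p + of ℤ R b ^ p - of ℤ R (a + b) ^ p =
      p * (of ℤ R (a + b) * d * r' - of ℤ R a * of ℤ R b * r) + d ^ p := by
    rw [show of ℤ R (a + b) + d = of ℤ R a + of ℤ R b by ring] at hr'
    linear_combination hr' - hr
  rw [hsum]
  exact Submodule.add_mem_sup (Ideal.mul_mem_right _ _ (Ideal.mem_span_singleton_self _))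
    (Ideal.pow_le_pow_right hp.two_le (Ideal.pow_mem_pow hd p))

theorem Iid_le_span_p_sup_sq (p : ℕ) [Fact p.Prime] [CharP R p] [PerfectRing R p] :
    Iid R ≤ Ideal.span {(p : ZR R)} ⊔ Iid R ^ 2 :=
  Iid_le_of_of_add_sub_mem fun x y => by
    obtain ⟨a, rfl⟩ := surjective_frobenius R p x
    obtain ⟨b, rfl⟩ := surjective_frobenius R p y
    rw [← (frobenius R p).map_add, frobenius_def, frobenius_def, frobenius_def, map_pow, map_pow,
      map_pow]
    exact of_pow_add_of_pow_sub_of_add_pow_mem Fact.out a b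

end ZR

noncomputable def teichmullerLift (p : ℕ) [Fact p.Prime] (R : Type*) [CommRing R] :
    ZR R →+* WittVector p R :=
  (MonoidAlgebra.lift ℤ (WittVector p R) R (teichmuller p)).toRingHom

section TeichmullerLift

variable {p : ℕ} [Fact p.Prime]

@[simp]
theorem teichmullerLift_of {R : Type*} [CommRing R] (r : R) :
    teichmullerLift p R (of ℤ R r) = teichmuller p r := by
  simp [teichmullerLift]

theorem constantCoeff_comp_teichmullerLift (R : Type*) [CommRing R] :
    constantCoeff.comp (teichmullerLift p R) = piHom R :=
  ZR.ringHom_ext fun r => by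
    rw [RingHom.comp_apply, teichmullerLift_of, piHom_of]
    exact teichmuller_coeff_zero p r

theorem teichmullerLift_comp_ZRmap {R₁ R₂ : Type*} [CommRing R₁] [CommRing R₂] (f : R₁ →+* R₂) :
    (teichmullerLift p R₂).comp (ZRmap f) = (WittVector.map f).comp (teichmullerLift p R₁) :=
  ZR.ringHom_ext fun r => by
    rw [RingHom.comp_apply, RingHom.comp_apply, ZRmap_of, teichmullerLift_of, teichmullerLift_of,
      map_teichmuller]

variable {R : Type*} [CommRing R] [CharP R p] [PerfectRing R p]

theorem Iid_eq_comap_teichmullerLift :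
    Iid R = (Ideal.span {(p : WittVector p R)}).comap (teichmullerLift p R) := by
  rw [← ker_constantCoeff, RingHom.comap_ker, constantCoeff_comp_teichmullerLift, Iid]

theorem Iid_pow_le_comap_teichmullerLift (ν : ℕ) :
    Iid R ^ ν ≤ (Ideal.span {(p : WittVector p R) ^ ν}).comap (teichmullerLift p R) := by
  rw [← Ideal.span_singleton_pow, Iid_eq_comap_teichmullerLift]
  exact Ideal.le_comap_pow _ ν

theorem comap_teichmullerLift_le_Iid_pow (ν : ℕ) :
    (Ideal.span {(p : WittVector p R) ^ ν}).comap (teichmullerLift p R) ≤ Iid R ^ ν := by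
  induction ν with
  | zero => simp
  | succ ν ih =>
    intro a ha
    have haν : a ∈ Iid R ^ ν := ih <| Ideal.span_singleton_le_span_singleton.mpr
      (pow_dvd_pow _ ν.le_succ) ha
    have hp : Ideal.span {(p : ZR R)} ≤ Iid R :=
      (Ideal.span_singleton_le_iff_mem _).mpr (natCast_mem_Iid p)
    obtain ⟨s, hs, e, he, rfl⟩ := Submodule.mem_sup.mp <|
      Ideal.pow_le_pow_sup_pow_succ hp (Iid_le_span_p_sup_sq p) ν haν
    rw [Ideal.span_singleton_pow, Ideal.mem_span_singleton] at hs
    obtain ⟨b, rfl⟩ := hs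
    -- `θ(e) ∈ (p^(ν+1))` as well, so `p^ν θ(b) ∈ (p^(ν+1))`; `W(R)` is `p`-torsion free
    have hb : b ∈ Iid R := by
      rw [Iid_eq_comap_teichmullerLift, Ideal.mem_comap]
      refine mem_span_p_of_p_pow_mul_mem (n := ν) ?_
      simpa using sub_mem ha (Iid_pow_le_comap_teichmullerLift (ν + 1) he)
    rw [pow_succ]
    exact add_mem (Ideal.mul_mem_mul (Ideal.pow_mem_pow (natCast_mem_Iid p) ν) hb) he

theorem Iid_pow_eq_comap_teichmullerLift (ν : ℕ) :
    Iid R ^ ν = (Ideal.span {(p : WittVector p R) ^ ν}).comap (teichmullerLift p R) :=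
  le_antisymm (Iid_pow_le_comap_teichmullerLift ν) (comap_teichmullerLift_le_Iid_pow ν)

end TeichmullerLift

section Functoriality

variable {R₁ R₂ : Type*} [CommRing R₁] [CommRing R₂] {f : R₁ →+* R₂}

theorem Cmap_eq_Clim_map (f : R₁ →+* R₂) : Cmap f = Clim.map (ZRmap f) (Iid_pow_le f) :=
  rfl

theorem comap_ZRmap_Iid_pow_le (p : ℕ) [Fact p.Prime] [CharP R₁ p] [PerfectRing R₁ p]
    [CharP R₂ p] [PerfectRing R₂ p] (hf : Injective f) (ν : ℕ) :
    (Iid R₂ ^ ν).comap (ZRmap f) ≤ Iid R₁ ^ ν := by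
  intro a ha
  rw [Ideal.mem_comap, Iid_pow_eq_comap_teichmullerLift (p := p), Ideal.mem_comap,
    ← RingHom.comp_apply, teichmullerLift_comp_ZRmap, RingHom.comp_apply] at ha
  rw [Iid_pow_eq_comap_teichmullerLift (p := p)]
  exact mem_span_p_pow_of_map_mem hf ha

theorem ZRmap_surjective (hf : Surjective f) : Surjective (ZRmap f) := by
  intro z
  induction z using MonoidAlgebra.induction_on with
  | of r =>
    obtain ⟨r', rfl⟩ := hf r
    exact ⟨of ℤ R₁ r', ZRmap_of f r'⟩
  | add x y hx hy =>
    obtain ⟨x', rfl⟩ := hx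
    obtain ⟨y', rfl⟩ := hy
    exact ⟨x' + y', map_add _ x' y'⟩
  | smul n x hx =>
    obtain ⟨x', rfl⟩ := hx
    exact ⟨n • x', map_zsmul _ n x'⟩

theorem map_ZRmap_Iid (hf : Surjective f) : (Iid R₁).map (ZRmap f) = Iid R₂ := by
  refine le_antisymm (Ideal.map_le_iff_le_comap.mpr (by simpa using Iid_pow_le f 1)) ?_
  intro t ht
  obtain ⟨s, rfl⟩ := ZRmap_surjective hf t
  -- `s - [π s] + [0]` lies in `I₁` and has the same image as `s`, because `π₂ (ℤf s) = 0`
  refine (Ideal.mem_map_iff_of_surjective _ (ZRmap_surjective hf)).mpr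
    ⟨s - of ℤ R₁ (piHom R₁ s) + of ℤ R₁ 0, ?_, ?_⟩
  · rw [Iid, RingHom.mem_ker, map_add, map_sub, piHom_of, piHom_of, sub_self, zero_add]
  · have hπ : f (piHom R₁ s) = 0 := by
      rw [← RingHom.comp_apply, ← piHom_comp_ZRmap, RingHom.comp_apply]
      exact RingHom.mem_ker.mp ht
    rw [map_add, map_sub, ZRmap_of, ZRmap_of, hπ, map_zero f, sub_add_cancel]

end Functoriality

/-- Let `p` be a prime and `f : R₁ → R₂` a ring homomorphism of perfect
`𝔽_p`-algebras, and `C(f) : C(R₁) → C(R₂)` the functorially induced ring homomorphism.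
If `f` is injective then `C(f)` is injective, and if `f` is surjective then `C(f)` is
surjective. -/
theorem statement11 (p : ℕ) [Fact p.Prime] (R₁ R₂ : Type*) [CommRing R₁] [CommRing R₂]
    [CharP R₁ p] [CharP R₂ p]
    (hperf₁ : Function.Bijective fun x : R₁ => x ^ p)
    (hperf₂ : Function.Bijective fun x : R₂ => x ^ p)
    (f : R₁ →+* R₂) :
    (Function.Injective f → Function.Injective (Cmap f)) ∧
    (Function.Surjective f → Function.Surjective (Cmap f)) := by
  have : PerfectRing R₁ p := ⟨hperf₁⟩
  have : PerfectRing R₂ p := ⟨hperf₂⟩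
  rw [Cmap_eq_Clim_map]
  exact ⟨fun hf => Clim.map_injective _ _ (comap_ZRmap_Iid_pow_le p hf),
    fun hf => Clim.map_surjective _ _ (ZRmap_surjective hf) (map_ZRmap_Iid hf)⟩
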